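/- Define v : ℝ → ℝ by v(x) := exp(−x²/2)·π^(−1/2)·∫₀^∞ exp(−t² − 2xt)·t^(−1/2) dt, and for b > 0 set W₁(b) := −v′(0)·(v(b) − b·v′(b)) − v(0)·v′(b). Then there exists a constant C > 0 such that |W₁(b) − √2| ≤ C·b³ for all b ∈ (0,1]. -/

import Mathlib

/-!
Write `v(x) = e^{-x²/2} π^{-1/2} G_{-1/2}(x)` with `G_s(x) = ∫₀^∞ e^{-t²-2xt} t^s dt`.
Differentiating under the integral gives `∂ₓ G_s = -2 G_{s+1}`, and integrating by parts in `t`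
gives `s G_{s-1} = 2 G_{s+1} + 2x G_s`; together they yield the Weber equation `v'' = x² v`.
Hence `W₁'(b) = b² v(b) (b v'(0) - v(0))`, so `W₁(b) - W₁(0) = O(b³)` by the mean value
inequality, while `W₁(0) = -2 v(0) v'(0) = Γ(1/4) Γ(3/4) / π = 1 / sin(π/4) = √2` by the
reflection formula.
-/

open Set Real MeasureTheory Filter Topology

/-- `v(x) = e^(−x²/2) · H_{−1/2}(x)` via the integral representation
`H_{−1/2}(x) = π^(−1/2) ∫₀^∞ e^(−t² − 2xt) t^(−1/2) dt`. -/
noncomputable def vFun (x : ℝ) : ℝ :=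
  Real.exp (-x ^ 2 / 2) * π ^ (-(1 / 2) : ℝ) *
    ∫ t in Set.Ioi (0 : ℝ), Real.exp (-t ^ 2 - 2 * x * t) * t ^ (-(1 / 2) : ℝ)

/-- The Wronskian `W₁(b) = −v′(0)(v(b) − b v′(b)) − v(0) v′(b)` of Example 5.1. -/
noncomputable def W₁ (b : ℝ) : ℝ :=
  -deriv vFun 0 * (vFun b - b * deriv vFun b) - vFun 0 * deriv vFun b

lemma exists_abs_sub_le_mul_cube_of_hasDerivAt_sq_mul {f g : ℝ → ℝ}
    (hf : ∀ t ∈ Icc (0 : ℝ) 1, HasDerivAt f (t ^ 2 * g t) t) (hg : ContinuousOn g (Icc 0 1)) :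
    ∃ C > 0, ∀ b ∈ Ioc (0 : ℝ) 1, |f b - f 0| ≤ C * b ^ 3 := by
  obtain ⟨M, hM⟩ := isCompact_Icc.exists_bound_of_continuousOn hg
  refine ⟨max M 1, by positivity, fun b ⟨hb0, hb1⟩ => ?_⟩
  have hsub : Icc 0 b ⊆ Icc (0 : ℝ) 1 := Icc_subset_Icc_right hb1
  have hderiv_le : ∀ t ∈ Icc 0 b, ‖t ^ 2 * g t‖ ≤ b ^ 2 * max M 1 := fun t ht => by
    rw [norm_mul, norm_pow, Real.norm_of_nonneg ht.1]
    exact mul_le_mul (pow_le_pow_left₀ ht.1 ht.2 2) ((hM t (hsub ht)).trans (le_max_left _ _))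
      (norm_nonneg _) (sq_nonneg b)
  have h := (convex_Icc 0 b).norm_image_sub_le_of_norm_hasDerivWithin_le
    (fun t ht => (hf t (hsub ht)).hasDerivWithinAt) hderiv_le (left_mem_Icc.2 hb0.le)
    (right_mem_Icc.2 hb0.le)
  rw [Real.norm_eq_abs, sub_zero, Real.norm_of_nonneg hb0.le] at h
  linarith

noncomputable def gaussKernel (x t : ℝ) : ℝ := exp (-t ^ 2 - 2 * x * t)

noncomputable def gaussMoment (s x : ℝ) : ℝ := ∫ t in Ioi 0, gaussKernel x t * t ^ s

lemma continuous_gaussKernel (x : ℝ) : Continuous (gaussKernel x) := by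
  unfold gaussKernel; fun_prop

lemma continuousOn_gaussKernel_mul_rpow (s x : ℝ) :
    ContinuousOn (fun t => gaussKernel x t * t ^ s) (Ioi 0) :=
  (continuous_gaussKernel x).continuousOn.mul
    fun t ht => (continuousAt_rpow_const t s (Or.inl (ne_of_gt ht))).continuousWithinAt

lemma gaussKernel_pos (x t : ℝ) : 0 < gaussKernel x t := exp_pos _

lemma gaussKernel_le {x B t : ℝ} (hx : |x| ≤ B) (ht : 0 ≤ t) :
    gaussKernel x t ≤ exp (2 * B ^ 2) * exp (-(1 / 2) * t ^ 2) := by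
  rw [gaussKernel, ← exp_add, exp_le_exp]
  nlinarith [sq_nonneg (t - 2 * B), mul_nonneg (by linarith [neg_abs_le x] : 0 ≤ x + B) ht]

lemma norm_gaussKernel_mul_rpow_le (s : ℝ) {x B t : ℝ} (hx : |x| ≤ B) (ht : 0 < t) :
    ‖gaussKernel x t * t ^ s‖ ≤ exp (2 * B ^ 2) * (t ^ s * exp (-(1 / 2) * t ^ 2)) := by
  rw [norm_mul, norm_of_nonneg (gaussKernel_pos x t).le, norm_of_nonneg (rpow_nonneg ht.le s)]
  calc gaussKernel x t * t ^ s ≤ exp (2 * B ^ 2) * exp (-(1 / 2) * t ^ 2) * t ^ s :=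
        mul_le_mul_of_nonneg_right (gaussKernel_le hx ht.le) (rpow_nonneg ht.le s)
    _ = _ := by ring

lemma integrableOn_gaussKernel_mul_rpow {s : ℝ} (hs : -1 < s) (x : ℝ) :
    IntegrableOn (fun t => gaussKernel x t * t ^ s) (Ioi 0) :=
  ((integrableOn_rpow_mul_exp_neg_mul_sq (by norm_num) hs).const_mul _).mono'
    ((continuousOn_gaussKernel_mul_rpow s x).aestronglyMeasurable measurableSet_Ioi)
    ((ae_restrict_mem measurableSet_Ioi).mono fun _ ht =>
      norm_gaussKernel_mul_rpow_le s le_rfl ht)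

lemma hasDerivAt_gaussKernel_left (x t : ℝ) :
    HasDerivAt (fun y => gaussKernel y t) (-2 * t * gaussKernel x t) x := by
  convert (((hasDerivAt_id x).mul_const (-2 * t)).const_add (-t ^ 2)).exp using 1
  · ext y; simp only [gaussKernel, id]; ring_nf
  · simp only [gaussKernel, id]; ring_nf

lemma hasDerivAt_gaussKernel_right (x t : ℝ) :
    HasDerivAt (gaussKernel x) ((-2 * t - 2 * x) * gaussKernel x t) t := by
  convert ((hasDerivAt_pow 2 t).neg.sub ((hasDerivAt_id t).const_mul (2 * x))).exp using 1
  · ext y; simp only [gaussKernel, id, Pi.neg_apply, Pi.sub_apply]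
  · simp only [gaussKernel, id, Pi.neg_apply, Pi.sub_apply]; ring_nf

lemma hasDerivAt_gaussMoment {s : ℝ} (hs : -1 < s) (x : ℝ) :
    HasDerivAt (gaussMoment s) (-2 * gaussMoment (s + 1) x) x := by
  have hbound : ∀ᵐ t ∂volume.restrict (Ioi 0), ∀ y ∈ Metric.ball x 1,
      ‖-2 * (gaussKernel y t * t ^ (s + 1))‖ ≤
        2 * (exp (2 * (|x| + 1) ^ 2) * (t ^ (s + 1) * exp (-(1 / 2) * t ^ 2))) := by
    filter_upwards [ae_restrict_mem measurableSet_Ioi] with t ht y hy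
    have hy' : |y| ≤ |x| + 1 := by
      have := abs_sub_abs_le_abs_sub y x
      rw [Metric.mem_ball, dist_eq] at hy
      linarith
    rw [norm_mul, norm_neg, Real.norm_two]
    exact mul_le_mul_of_nonneg_left (norm_gaussKernel_mul_rpow_le (s + 1) hy' ht) two_pos.le
  have hdiff : ∀ᵐ t ∂volume.restrict (Ioi 0), ∀ y ∈ Metric.ball x 1,
      HasDerivAt (fun y => gaussKernel y t * t ^ s) (-2 * (gaussKernel y t * t ^ (s + 1))) y := by
    filter_upwards [ae_restrict_mem measurableSet_Ioi] with t (ht : 0 < t) y _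
    refine ((hasDerivAt_gaussKernel_left y t).mul_const (t ^ s)).congr_deriv ?_
    rw [rpow_add_one ht.ne']
    ring
  have h := (hasDerivAt_integral_of_dominated_loc_of_deriv_le (Metric.ball_mem_nhds x one_pos)
    (.of_forall fun y =>
      (continuousOn_gaussKernel_mul_rpow s y).aestronglyMeasurable measurableSet_Ioi)
    (integrableOn_gaussKernel_mul_rpow hs x)
    (((continuousOn_gaussKernel_mul_rpow (s + 1) x).aestronglyMeasurable
      measurableSet_Ioi).const_mul _)
    hbound
    (((integrableOn_rpow_mul_exp_neg_mul_sq (by norm_num) (by linarith)).const_mul _).const_mul 2)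
    hdiff).2
  rwa [integral_const_mul] at h

lemma gaussMoment_zero {s : ℝ} (hs : -1 < s) : gaussMoment s 0 = Gamma ((s + 1) / 2) / 2 := by
  convert integral_rpow_mul_exp_neg_rpow two_pos hs using 1
  · refine setIntegral_congr_fun measurableSet_Ioi fun t _ => ?_
    rw [gaussKernel, rpow_two]
    ring_nf
  · ring

lemma tendsto_gaussKernel_mul_rpow_atTop (s x : ℝ) :
    Tendsto (fun t => gaussKernel x t * t ^ s) atTop (𝓝 0) := by
  have hlim := (tendsto_rpow_mul_exp_neg_mul_atTop_nhds_zero s 1 one_pos).const_mul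
    (exp ((x - 1 / 2) ^ 2))
  rw [mul_zero] at hlim
  refine squeeze_zero' ?_ ?_ hlim
  · filter_upwards [eventually_ge_atTop 0] with t ht
    exact mul_nonneg (gaussKernel_pos x t).le (rpow_nonneg ht s)
  · filter_upwards [eventually_ge_atTop 0] with t ht
    -- complete the square: `-t² - 2xt + t = (x - 1/2)² - (t + x - 1/2)²`
    have hK : gaussKernel x t ≤ exp ((x - 1 / 2) ^ 2) * exp (-1 * t) := by
      rw [gaussKernel, ← exp_add, exp_le_exp]
      nlinarith [sq_nonneg (t + x - 1 / 2)]
    calc gaussKernel x t * t ^ s ≤ exp ((x - 1 / 2) ^ 2) * exp (-1 * t) * t ^ s :=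
          mul_le_mul_of_nonneg_right hK (rpow_nonneg ht s)
      _ = _ := by ring

lemma gaussMoment_recurrence {s : ℝ} (hs : 0 < s) (x : ℝ) :
    s * gaussMoment (s - 1) x = 2 * gaussMoment (s + 1) x + 2 * x * gaussMoment s x := by
  have hderiv : ∀ t ∈ Ioi (0 : ℝ), HasDerivAt (fun t => gaussKernel x t * t ^ s)
      (s * (gaussKernel x t * t ^ (s - 1)) - 2 * (gaussKernel x t * t ^ (s + 1))
        - 2 * x * (gaussKernel x t * t ^ s)) t := by
    intro t (ht : 0 < t)
    refine ((hasDerivAt_gaussKernel_right x t).mul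
      (hasDerivAt_rpow_const (Or.inl ht.ne'))).congr_deriv ?_
    rw [rpow_add_one ht.ne']
    ring
  have hint : ∀ r : ℝ, -1 < r → Integrable (fun t => gaussKernel x t * t ^ r)
      (volume.restrict (Ioi 0)) := fun r hr => integrableOn_gaussKernel_mul_rpow hr x
  have hm := (hint (s - 1) (by linarith)).const_mul s
  have hp := (hint (s + 1) (by linarith)).const_mul 2
  have h0 := (hint s (by linarith)).const_mul (2 * x)
  have hibp := integral_Ioi_of_hasDerivAt_of_tendsto (f := fun t => gaussKernel x t * t ^ s)
    ((continuous_gaussKernel x).continuousAt.mul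
      (continuousAt_rpow_const 0 s (Or.inr hs.le))).continuousWithinAt
    hderiv ((hm.sub hp).sub h0) (tendsto_gaussKernel_mul_rpow_atTop s x)
  rw [integral_sub, integral_sub, integral_const_mul, integral_const_mul, integral_const_mul,
    zero_rpow hs.ne', mul_zero, sub_zero] at hibp
  · simp only [gaussMoment]
    linarith
  exacts [hm, hp, hm.sub hp, h0]

lemma vFun_eq (x : ℝ) :
    vFun x = exp (-x ^ 2 / 2) * π ^ (-(1 / 2) : ℝ) * gaussMoment (-(1 / 2)) x := rfl

noncomputable def vFun' (x : ℝ) : ℝ :=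
  exp (-x ^ 2 / 2) * π ^ (-(1 / 2) : ℝ) *
    (-x * gaussMoment (-(1 / 2)) x - 2 * gaussMoment (1 / 2) x)

lemma hasDerivAt_exp_neg_sq_div_two (x : ℝ) :
    HasDerivAt (fun x => exp (-x ^ 2 / 2)) (-x * exp (-x ^ 2 / 2)) x := by
  convert ((hasDerivAt_pow 2 x).const_mul (-1 / 2)).exp using 1
  · ext y; ring_nf
  · push_cast; ring_nf

lemma hasDerivAt_vFun (x : ℝ) : HasDerivAt vFun (vFun' x) x := by
  have hG := hasDerivAt_gaussMoment (s := -(1 / 2)) (by norm_num) x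
  norm_num at hG
  refine (((hasDerivAt_exp_neg_sq_div_two x).mul_const (π ^ (-(1 / 2) : ℝ))).mul
    hG).congr_deriv ?_
  rw [vFun']
  ring

lemma deriv_vFun : deriv vFun = vFun' := funext fun x => (hasDerivAt_vFun x).deriv

lemma continuous_vFun : Continuous vFun :=
  continuous_iff_continuousAt.2 fun x => (hasDerivAt_vFun x).continuousAt

lemma hasDerivAt_vFun' (x : ℝ) : HasDerivAt vFun' (x ^ 2 * vFun x) x := by
  have hGm := hasDerivAt_gaussMoment (s := -(1 / 2)) (by norm_num) x
  have hGp := hasDerivAt_gaussMoment (s := 1 / 2) (by norm_num) x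
  have hrec := gaussMoment_recurrence (s := 1 / 2) (by norm_num) x
  norm_num at hGm hGp hrec
  refine (((hasDerivAt_exp_neg_sq_div_two x).mul_const (π ^ (-(1 / 2) : ℝ))).mul
    (((hasDerivAt_id x).neg.mul hGm).sub (hGp.const_mul 2))).congr_deriv ?_
  simp only [vFun_eq, Pi.mul_apply, Pi.neg_apply, Pi.sub_apply, id]
  linear_combination (-2) * exp (-x ^ 2 / 2) * π ^ (-(1 / 2) : ℝ) * hrec

lemma W₁_eq (b : ℝ) : W₁ b = -vFun' 0 * (vFun b - b * vFun' b) - vFun 0 * vFun' b := by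
  rw [W₁, deriv_vFun]

lemma hasDerivAt_W₁ (b : ℝ) :
    HasDerivAt W₁ (b ^ 2 * (vFun b * (b * vFun' 0 - vFun 0))) b := by
  have h := (((hasDerivAt_vFun b).sub ((hasDerivAt_id b).mul (hasDerivAt_vFun' b))).const_mul
    (-vFun' 0)).sub ((hasDerivAt_vFun' b).const_mul (vFun 0))
  rw [show W₁ = _ from funext W₁_eq]
  refine h.congr_deriv ?_
  simp only [id]
  ring

lemma W₁_zero : W₁ 0 = √2 := by
  have hv : vFun 0 = π ^ (-(1 / 2) : ℝ) * (Gamma (1 / 4) / 2) := by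
    rw [vFun_eq, gaussMoment_zero (by norm_num)]
    norm_num
  have hv' : vFun' 0 = -(π ^ (-(1 / 2) : ℝ) * Gamma (3 / 4)) := by
    rw [vFun', gaussMoment_zero (by norm_num), gaussMoment_zero (by norm_num)]
    norm_num [show ((1 : ℝ) / 2 + 1) / 2 = 3 / 4 by norm_num, mul_div_cancel₀]
  have hπ : (π ^ (-(1 / 2) : ℝ)) ^ 2 = π⁻¹ := by
    rw [← rpow_natCast, ← rpow_mul pi_pos.le]
    norm_num [rpow_neg_one]
  have hreflect : Gamma (1 / 4) * Gamma (3 / 4) = π / (√2 / 2) := by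
    rw [show (3 / 4 : ℝ) = 1 - 1 / 4 by norm_num, Gamma_mul_Gamma_one_sub,
      show π * (1 / 4) = π / 4 by ring, sin_pi_div_four]
  calc W₁ 0 = (π ^ (-(1 / 2) : ℝ)) ^ 2 * (Gamma (1 / 4) * Gamma (3 / 4)) := by
        rw [W₁_eq, hv, hv']; ring
    _ = √2 := by
        rw [hπ, hreflect]
        field_simp
        rw [sq_sqrt zero_le_two]

/-- small-`b` asymptotics `W₁(b) = √2 + O(b³)` on `(0,1]`. -/
theorem stmt16 :
    ∃ C > 0, ∀ b ∈ Ioc (0 : ℝ) 1, |W₁ b - Real.sqrt 2| ≤ C * b ^ 3 := by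
  obtain ⟨C, hC, hbound⟩ := exists_abs_sub_le_mul_cube_of_hasDerivAt_sq_mul
    (fun t _ => hasDerivAt_W₁ t) (continuous_vFun.mul (by fun_prop)).continuousOn
  exact ⟨C, hC, fun b hb => W₁_zero ▸ hbound b hb⟩
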